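/- Let R be a domain containing ℚ, A an R-algebra which is an integral domain, and D : A → A a nonzero irreducible locally nilpotent R-derivation such that A = Ker(D)[t] is a polynomial ring in one variable t over Ker(D). Then D has a slice, i.e., there exists s ∈ A with D(s) = 1. -/

import Mathlib

/-!
A derivation `D` vanishing on `B` is `B`-linear, so on `A = B[t]` it acts as `D (p t) = p'(t) · D t`.
Hence `D A ⊆ D(t) A`, and irreducibility makes `D t` a unit of `A = B[t]`, i.e. a unit `c` of `B`;
then `s = c⁻¹ t` is a slice.
-/

open Polynomial

namespace Derivation

variable {R A : Type*} [CommRing R] [CommRing A] [Algebra R A]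

def extendScalars (D : Derivation R A A) (B : Subalgebra R A) (hB : ∀ b : B, D b = 0) :
    Derivation B A A :=
  mk' { toFun := D
        map_add' := D.map_add
        map_smul' := fun b x => by
          simp [Subalgebra.smul_def, D.leibniz, hB b] }
    fun x y => D.leibniz x y

@[simp]
lemma extendScalars_apply (D : Derivation R A A) (B : Subalgebra R A) (hB : ∀ b : B, D b = 0)
    (x : A) : D.extendScalars B hB x = D x :=
  rfl

end Derivation

section

variable {B A : Type*} [CommRing B] [CommRing A] [Algebra B A]

lemma Derivation.apply_dvd_of_surjective_aeval (D : Derivation B A A) {t : A}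
    (ht : Function.Surjective (aeval (R := B) t)) (x : A) : D t ∣ D x := by
  obtain ⟨p, rfl⟩ := ht x
  exact ⟨aeval t (derivative p), by rw [D.map_aeval, smul_eq_mul, mul_comm]⟩

lemma exists_isUnit_algebraMap_eq_of_bijective_aeval [IsDomain B] {t : A}
    (ht : Function.Bijective (aeval (R := B) t)) {a : A} (ha : IsUnit a) :
    ∃ c : B, IsUnit c ∧ algebraMap B A c = a := by
  let e : B[X] ≃ₐ[B] A := AlgEquiv.ofBijective (aeval t) ht
  obtain ⟨c, hc, hcp⟩ := Polynomial.isUnit_iff.mp (ha.map e.symm)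
  refine ⟨c, hc, ?_⟩
  rw [← aeval_C t c, hcp]
  exact e.apply_symm_apply a

end

theorem stmt_17_general {R A : Type*} [CommRing R]
    [CommRing A] [IsDomain A] [Algebra R A]
    (D : Derivation R A A)
    (hirr : ∀ α : A, (∀ x : A, ∃ y : A, D x = α * y) → IsUnit α)
    (B : Subalgebra R A) (hB : ∀ a : A, a ∈ B ↔ D a = 0)
    (t : A) (ht : Function.Bijective (Polynomial.aeval (R := B) t)) :
    ∃ s : A, D s = 1 := by
  let D' := D.extendScalars B fun b => (hB b).mp b.2
  have hunit : IsUnit (D t) := hirr _ (D'.apply_dvd_of_surjective_aeval ht.surjective)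
  obtain ⟨c, hc, hcDt⟩ := exists_isUnit_algebraMap_eq_of_bijective_aeval ht hunit
  refine ⟨(↑hc.unit⁻¹ : B) • t, ?_⟩
  change D' _ = 1
  rw [D'.map_smul, Derivation.extendScalars_apply, ← hcDt, Algebra.smul_def, ← map_mul,
    hc.val_inv_mul, map_one]

/-- Converse of the slice theorem: if `R` is a domain containing `ℚ`, `A` a domain
which is an `R`-algebra, and `D` a nonzero irreducible locally nilpotent
`R`-derivation of `A` such that `A = Ker(D)[t]` is a polynomial ring in one variable
`t` over `Ker(D)`, then `D` has a slice. -/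
theorem stmt_17 {R A : Type*} [CommRing R] [IsDomain R] [Algebra ℚ R]
    [CommRing A] [IsDomain A] [Algebra R A]
    (D : Derivation R A A) (hln : ∀ x : A, ∃ n : ℕ, (⇑D)^[n] x = 0) (hD : D ≠ 0)
    (hirr : ∀ α : A, (∀ x : A, ∃ y : A, D x = α * y) → IsUnit α)
    (B : Subalgebra R A) (hB : ∀ a : A, a ∈ B ↔ D a = 0)
    (t : A) (ht : Function.Bijective (Polynomial.aeval (R := B) t)) :
    ∃ s : A, D s = 1 :=
  stmt_17_general D hirr B hB t ht
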